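/- arXiv:2404.06821 — 3 statements merged into one kernel-verified Lean document; each statement's English description precedes it below -/
import Mathlib

section
/- Let $\delta > 0$ and for $j \geq 1$ set $I_j := \int_{1/j}^{1/j+\delta} \left( \frac{1}{z} - \frac{1}{\sqrt{\delta^2 - 1/j^2 + 2z/j}} \right) dz$. Then $I_j = \ln(\delta j + 1) + O(1)$ as $j \to \infty$; more precisely, $|I_j - \ln(\delta j + 1)| \leq 2$ for all sufficiently large $j$. -/
/-!
With `a = 1/j` the integrand is `1/z - 1/√(δ² - a² + 2az)`. The first term integrates to
`log ((a + δ)/a) = log (δj + 1)`, and `z ↦ √(δ² - a² + 2az)/a` is an antiderivative of the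
second, which therefore integrates to `(a + δ - √(a² + δ²))/a`. Since
`δ ≤ √(a² + δ²) ≤ a + δ`, this lies in `[0, 1]`, so the error is at most `1` for every
`j ≥ 1`.
-/

open Real MeasureTheory intervalIntegral

theorem hasDerivAt_two_mul_sqrt_affine_div {b c z : ℝ} (hb : b ≠ 0) (h : 0 < c + b * z) :
    HasDerivAt (fun z => 2 * √(c + b * z) / b) (1 / √(c + b * z)) z := by
  have hlin : HasDerivAt (fun z => c + b * z) b z := by
    simpa using ((hasDerivAt_id z).const_mul b).const_add c
  refine (((hlin.sqrt h.ne').const_mul 2).div_const b).congr_deriv ?_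
  field_simp [(sqrt_pos.2 h).ne']

theorem integral_one_div_sqrt_affine {b c x y : ℝ} (hb : b ≠ 0)
    (h : ∀ z ∈ Set.uIcc x y, 0 < c + b * z) :
    ∫ z in x..y, 1 / √(c + b * z) = 2 * √(c + b * y) / b - 2 * √(c + b * x) / b := by
  refine integral_eq_sub_of_hasDerivAt
    (fun z hz => hasDerivAt_two_mul_sqrt_affine_div hb (h z hz)) ?_
  refine ContinuousOn.intervalIntegrable (continuousOn_const.div (by fun_prop) ?_)
  exact fun z hz => (sqrt_pos.2 (h z hz)).ne'

theorem integral_one_div_sub_one_div_sqrt {a δ : ℝ} (ha : 0 < a) (hδ : 0 ≤ δ) :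
    ∫ z in a..a + δ, (1 / z - 1 / √(δ ^ 2 - a ^ 2 + 2 * a * z)) =
      log ((a + δ) / a) - (a + δ - √(a ^ 2 + δ ^ 2)) / a := by
  have hIcc : Set.uIcc a (a + δ) = Set.Icc a (a + δ) := Set.uIcc_of_le (by linarith)
  have hpos : ∀ z ∈ Set.uIcc a (a + δ), 0 < δ ^ 2 - a ^ 2 + 2 * a * z := by
    rw [hIcc]
    intro z hz
    nlinarith [hz.1]
  have hzero : (0 : ℝ) ∉ Set.uIcc a (a + δ) := by
    rw [hIcc]
    exact fun hz => ha.not_ge hz.1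
  have hinv : IntervalIntegrable (fun z : ℝ => 1 / z) volume a (a + δ) :=
    (continuousOn_const.div continuousOn_id
      fun z hz => ne_of_mem_of_not_mem hz hzero).intervalIntegrable
  have hsqrt :
      IntervalIntegrable (fun z => 1 / √(δ ^ 2 - a ^ 2 + 2 * a * z)) volume a (a + δ) :=
    (continuousOn_const.div (by fun_prop)
      fun z hz => (sqrt_pos.2 (hpos z hz)).ne').intervalIntegrable
  have hend : δ ^ 2 - a ^ 2 + 2 * a * (a + δ) = (a + δ) ^ 2 := by ring
  have hstart : δ ^ 2 - a ^ 2 + 2 * a * a = a ^ 2 + δ ^ 2 := by ring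
  rw [integral_sub hinv hsqrt, integral_one_div hzero,
    integral_one_div_sqrt_affine (by positivity) hpos, hend, hstart, sqrt_sq (by linarith)]
  field_simp

theorem sub_sqrt_sq_add_sq_mem_Icc {a δ : ℝ} (ha : 0 ≤ a) (hδ : 0 ≤ δ) :
    a + δ - √(a ^ 2 + δ ^ 2) ∈ Set.Icc 0 a := by
  have hlower : δ ≤ √(a ^ 2 + δ ^ 2) := le_sqrt_of_sq_le (by nlinarith)
  have hupper : √(a ^ 2 + δ ^ 2) ≤ a + δ := sqrt_le_iff.2 ⟨by linarith, by nlinarith⟩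
  constructor <;> linarith

theorem abs_integral_one_div_sub_one_div_sqrt_sub_log_le_one {a δ : ℝ} (ha : 0 < a)
    (hδ : 0 ≤ δ) :
    |(∫ z in a..a + δ, (1 / z - 1 / √(δ ^ 2 - a ^ 2 + 2 * a * z))) - log ((a + δ) / a)|
      ≤ 1 := by
  obtain ⟨hnonneg, hle⟩ := sub_sqrt_sq_add_sq_mem_Icc ha.le hδ
  rw [integral_one_div_sub_one_div_sqrt ha hδ, sub_sub_cancel_left, abs_neg,
    abs_of_nonneg (div_nonneg hnonneg ha.le)]
  exact div_le_one_of_le₀ hle ha.le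

theorem log_integral_asymptotics (δ : ℝ) (hδ : 0 < δ) :
    ∃ N : ℕ, ∀ j : ℕ, N ≤ j →
      |(∫ z in (1 / (j : ℝ))..(1 / (j : ℝ) + δ),
          (1 / z - 1 / Real.sqrt (δ ^ 2 - 1 / (j : ℝ) ^ 2 + 2 * z / (j : ℝ)))) -
        Real.log (δ * (j : ℝ) + 1)| ≤ 2 := by
  refine ⟨1, fun j hj₁ => ?_⟩
  have hj : (0 : ℝ) < j := by exact_mod_cast hj₁
  have hintegrand : ∀ z : ℝ, δ ^ 2 - 1 / (j : ℝ) ^ 2 + 2 * z / j =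
      δ ^ 2 - (1 / (j : ℝ)) ^ 2 + 2 * (1 / (j : ℝ)) * z := fun z => by ring
  have hlog : δ * (j : ℝ) + 1 = (1 / (j : ℝ) + δ) / (1 / (j : ℝ)) := by
    field_simp
    ring
  simp_rw [hintegrand, hlog]
  linarith [abs_integral_one_div_sub_one_div_sqrt_sub_log_le_one (one_div_pos.2 hj) hδ.le]
end

section
/- With $\Pi^0(x,y) = \frac{\alpha}{r} I + \frac{\beta}{r} \bar{x} \otimes \bar{x}$ where $r = |x-y|$ and $\bar{x} = (x-y)/|x-y|$, for any $b \in \mathbb{R}^3$ and $x \neq y$ one has the identity $\left[ \nabla_x(\Pi^0(x,y) b) \right] \left( \Pi^0(x,y) b \right) = \frac{1}{r^3}\left[ -\alpha^2 (\bar{x}\cdot b)\, b + \left( \alpha\beta - (3\alpha\beta + \beta^2)(\bar{x}\cdot b)^2 \right) \bar{x} \right]$, provided $|b| = 1$. -/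
/-!
With `u = x - y`, the field is `α ‖u‖⁻¹ b + β ⟪u, b⟫ ‖u‖⁻³ u`. Since `d(‖u‖⁻¹) = -‖u‖⁻³ ⟪u, ·⟫`,
the product rule gives its derivative in every direction `v`, and for `v = Π⁰ b` only the two
scalars `⟪u, Π⁰ b⟫ = (α + β) ⟪u, b⟫ / ‖u‖` and `⟪Π⁰ b, b⟫ = α / ‖u‖ + β ⟪u, b⟫² / ‖u‖³`
(where `‖b‖ = 1` enters) remain to be substituted.
-/

open Real

/-- The Kelvin-type matrix `Π⁰(x,y)` applied to a fixed vector `b`. -/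
noncomputable def kelvinField (α β : ℝ) (y b : EuclideanSpace ℝ (Fin 3))
    (x : EuclideanSpace ℝ (Fin 3)) : EuclideanSpace ℝ (Fin 3) :=
  (α / ‖x - y‖) • b + (β * (inner ℝ (x - y) b : ℝ) / ‖x - y‖ ^ 3) • (x - y)

open scoped RealInnerProductSpace

section

variable {E : Type*} [NormedAddCommGroup E] [InnerProductSpace ℝ E]

theorem hasFDerivAt_inv_norm {u : E} (hu : u ≠ 0) :
    HasFDerivAt (fun w : E => ‖w‖⁻¹) (-(‖u‖ ^ 3)⁻¹ • innerSL ℝ u) u := by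
  have hr : ‖u‖ ≠ 0 := norm_ne_zero_iff.2 hu
  have hnorm : HasFDerivAt (fun w : E => ‖w‖) (‖u‖⁻¹ • innerSL ℝ u) u := by
    have hsqrt := (hasFDerivAt_id u).norm_sq.sqrt (pow_ne_zero 2 hr)
    simp only [id, norm_nonneg, Real.sqrt_sq, ContinuousLinearMap.comp_id] at hsqrt
    refine hsqrt.congr_fderiv ?_
    ext v
    simp only [smul_apply, coe_innerSL_apply, smul_eq_mul, nsmul_eq_mul, Nat.cast_ofNat]
    field_simp
  refine ((hasDerivAt_inv hr).comp_hasFDerivAt u hnorm).congr_fderiv ?_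
  ext v
  simp only [smul_apply, coe_innerSL_apply, smul_eq_mul, neg_smul, neg_apply, neg_inj]
  ring

/-- `Π⁰(u, 0) b`; by definition `kelvinField α β y b x = kelvinProfile α β b (x - y)`. -/
noncomputable def kelvinProfile (α β : ℝ) (b u : E) : E :=
  (α / ‖u‖) • b + (β * ⟪u, b⟫ / ‖u‖ ^ 3) • u

theorem fderiv_kelvinProfile_apply (α β : ℝ) (b : E) {u : E} (hu : u ≠ 0) (v : E) :
    fderiv ℝ (kelvinProfile α β b) u v =
      (‖u‖ ^ 3)⁻¹ • ((-α * ⟪u, v⟫) • b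
        + (β * ⟪v, b⟫ - 3 * β * ⟪u, b⟫ * ⟪u, v⟫ / ‖u‖ ^ 2) • u + (β * ⟪u, b⟫) • v) := by
  have hinv := hasFDerivAt_inv_norm hu
  have hinner : HasFDerivAt (fun w : E => ⟪w, b⟫) (innerSL ℝ b) u := by
    simpa [real_inner_comm] using (innerSL ℝ b).hasFDerivAt
  have hprofile : HasFDerivAt (fun w => (α * ‖w‖⁻¹) • b + (β * ⟪w, b⟫ * ‖w‖⁻¹ ^ 3) • w) _ u :=
    ((hinv.const_mul α).smul_const b).add
      (((hinner.const_mul β).mul (hinv.pow 3)).smul (hasFDerivAt_id u))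
  have hfun : kelvinProfile α β b =
      fun w => (α * ‖w‖⁻¹) • b + (β * ⟪w, b⟫ * ‖w‖⁻¹ ^ 3) • w := by
    funext w
    simp only [kelvinProfile, div_eq_mul_inv, inv_pow]
  rw [hfun, hprofile.fderiv]
  simp only [add_apply, smul_apply, neg_apply, ContinuousLinearMap.smulRight_apply,
    ContinuousLinearMap.id_apply, coe_innerSL_apply, Pi.mul_apply, smul_eq_mul, nsmul_eq_mul,
    neg_smul, smul_neg, inv_pow, Nat.cast_ofNat, real_inner_comm b v]
  match_scalars <;> ring

theorem inner_kelvinProfile (α β : ℝ) (b : E) {u : E} (hu : u ≠ 0) :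
    ⟪u, kelvinProfile α β b u⟫ = (α + β) * ⟪u, b⟫ / ‖u‖ := by
  simp only [kelvinProfile, inner_add_right, real_inner_smul_right, real_inner_self_eq_norm_sq]
  field_simp

theorem kelvinProfile_inner_of_norm_eq_one (α β : ℝ) {b : E} (hb : ‖b‖ = 1) (u : E) :
    ⟪kelvinProfile α β b u, b⟫ = α / ‖u‖ + β * ⟪u, b⟫ ^ 2 / ‖u‖ ^ 3 := by
  simp only [kelvinProfile, inner_add_left, real_inner_smul_left, real_inner_self_eq_norm_sq, hb]
  ring

end

/-- For a unit vector `b`,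
`[∇ₓ(Π⁰(x,y)b)](Π⁰(x,y)b) = r⁻³ [ -α²(x̄·b) b + (αβ - (3αβ+β²)(x̄·b)²) x̄ ]`. -/
theorem jacobian_kelvin_applied_to_itself (α β : ℝ)
    (x y b : EuclideanSpace ℝ (Fin 3)) (hxy : x ≠ y) (hb : ‖b‖ = 1) :
    fderiv ℝ (kelvinField α β y b) x (kelvinField α β y b x) =
      (‖x - y‖ ^ 3)⁻¹ •
        ((-(α ^ 2) * (inner ℝ (‖x - y‖⁻¹ • (x - y)) b : ℝ)) • b +
          (α * β - (3 * α * β + β ^ 2) * (inner ℝ (‖x - y‖⁻¹ • (x - y)) b : ℝ) ^ 2) •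
            (‖x - y‖⁻¹ • (x - y))) := by
  have hu : x - y ≠ 0 := sub_ne_zero.2 hxy
  change fderiv ℝ (fun z => kelvinProfile α β b (z - y)) x (kelvinProfile α β b (x - y)) = _
  rw [fderiv_comp_sub, fderiv_kelvinProfile_apply α β b hu, inner_kelvinProfile α β b hu,
    kelvinProfile_inner_of_norm_eq_one α β hb]
  simp only [kelvinProfile, real_inner_smul_left]
  match_scalars <;> field_simp <;> ring
end

section
/- With $\Pi^0(x,y) = \frac{\alpha}{r} I + \frac{\beta}{r} \bar{x} \otimes \bar{x}$, $r = |x-y|$, $\bar{x} = (x-y)/|x-y|$: if $b = \bar{x}$ (the unit vector from $y$ to $x$), then $\left[ \nabla_x(\Pi^0(x,y) b) \right] \left( \Pi^0(x,y) b \right) = -\frac{(\alpha+\beta)^2}{r^3}\, \bar{x}$. -/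
open Real

/-!
The unit vector `x̄` is an eigenvector of `Π⁰(x,y)`, with eigenvalue `(α + β)/r`, and, by the
general formula for the Jacobian of `x ↦ Π⁰(x,y) b`, also of `∇ₓ(Π⁰(x,y) x̄)`, with eigenvalue
`-(α + β)/r²`. The claim is the product of the two eigenvalues times `x̄`.
-/

open scoped RealInnerProductSpace

section InnerProductSpace

variable {E : Type*} [NormedAddCommGroup E] [InnerProductSpace ℝ E] {x : E}

theorem hasFDerivAt_norm_of_ne_zero (hx : x ≠ 0) :
    HasFDerivAt (‖·‖) (‖x‖⁻¹ • innerSL ℝ x) x := by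
  have h := (hasFDerivAt_id x).norm_sq.sqrt (by positivity)
  simp only [id, sqrt_sq (norm_nonneg _)] at h
  refine h.congr_fderiv ?_
  ext v
  simp [field]

theorem hasFDerivAt_inv_norm_pow (n : ℕ) (hx : x ≠ 0) :
    HasFDerivAt (fun z : E => (‖z‖ ^ n)⁻¹) ((-(n : ℝ) / ‖x‖ ^ (n + 2)) • innerSL ℝ x) x := by
  have hr : ‖x‖ ≠ 0 := norm_ne_zero_iff.2 hx
  refine (((hasDerivAt_pow n ‖x‖).inv (pow_ne_zero n hr)).comp_hasFDerivAt x
    (hasFDerivAt_norm_of_ne_zero hx)).congr_fderiv ?_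
  rw [smul_smul]
  congr 1
  rcases n with _ | n
  · simp
  · rw [Nat.add_sub_cancel]
    field_simp
    ring

theorem real_inner_inv_norm_smul_self_right (u : E) : ⟪u, ‖u‖⁻¹ • u⟫ = ‖u‖ := by
  rcases eq_or_ne u 0 with rfl | hu
  · simp
  · rw [real_inner_smul_right, real_inner_self_eq_norm_sq]
    field_simp

theorem real_inner_inv_norm_smul_self_self {u : E} (hu : u ≠ 0) :
    ⟪‖u‖⁻¹ • u, ‖u‖⁻¹ • u⟫ = 1 := by
  rw [real_inner_self_eq_norm_sq, norm_smul, norm_inv, norm_norm]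
  field_simp

end InnerProductSpace

local notation "E3" => EuclideanSpace ℝ (Fin 3)

theorem fderiv_kelvinField_apply (α β : ℝ) {x y : E3} (b v : E3) (hxy : x ≠ y) :
    fderiv ℝ (kelvinField α β y b) x v =
      (-α * ⟪x - y, v⟫ / ‖x - y‖ ^ 3) • b +
        (β / ‖x - y‖ ^ 3) • (⟪v, b⟫ • (x - y) + ⟪x - y, b⟫ • v) -
        (3 * β * ⟪x - y, b⟫ * ⟪x - y, v⟫ / ‖x - y‖ ^ 5) • (x - y) := by
  have hu : x - y ≠ 0 := sub_ne_zero.2 hxy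
  have hsub : HasFDerivAt (fun z : E3 => z - y) (ContinuousLinearMap.id ℝ E3) x :=
    (hasFDerivAt_id x).sub_const y
  have h1 := (hasFDerivAt_inv_norm_pow 1 hu).comp x hsub
  have h3 := (hasFDerivAt_inv_norm_pow 3 hu).comp x hsub
  have hb : HasFDerivAt (fun z : E3 => ⟪z - y, b⟫) (innerSL ℝ b) x := by
    simpa only [Function.comp_def, innerSL_apply_apply, real_inner_comm b,
      ContinuousLinearMap.comp_id] using (innerSL ℝ b).hasFDerivAt.comp x hsub
  have hF : HasFDerivAt (kelvinField α β y b) _ x :=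
    (((h1.const_mul α).smul_const b).add (((hb.const_mul β).mul h3).smul hsub))
      |>.congr_of_eventuallyEq (.of_forall fun z => by simp [kelvinField, div_eq_mul_inv])
  rw [hF.fderiv]
  simp only [add_apply, smul_apply, ContinuousLinearMap.smulRight_apply,
    ContinuousLinearMap.comp_apply, ContinuousLinearMap.id_apply, innerSL_apply_apply,
    Function.comp_apply, Pi.mul_apply, smul_eq_mul]
  rw [real_inner_comm b v]
  module

theorem kelvinField_unit (α β : ℝ) {x y : E3} (hxy : x ≠ y) :
    kelvinField α β y (‖x - y‖⁻¹ • (x - y)) x =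
      ((α + β) / ‖x - y‖) • (‖x - y‖⁻¹ • (x - y)) := by
  have hr : ‖x - y‖ ≠ 0 := norm_ne_zero_iff.2 (sub_ne_zero.2 hxy)
  rw [kelvinField, real_inner_inv_norm_smul_self_right]
  match_scalars <;> field_simp
  ring

theorem fderiv_kelvinField_unit (α β : ℝ) {x y : E3} (hxy : x ≠ y) :
    fderiv ℝ (kelvinField α β y (‖x - y‖⁻¹ • (x - y))) x (‖x - y‖⁻¹ • (x - y)) =
      (-(α + β) / ‖x - y‖ ^ 2) • (‖x - y‖⁻¹ • (x - y)) := by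
  have hu : x - y ≠ 0 := sub_ne_zero.2 hxy
  have hr : ‖x - y‖ ≠ 0 := norm_ne_zero_iff.2 hu
  rw [fderiv_kelvinField_apply α β _ _ hxy, real_inner_inv_norm_smul_self_right,
    real_inner_inv_norm_smul_self_self hu]
  match_scalars <;> field_simp <;> ring

/-- If `b = x̄` is the unit vector from `y` to `x`, then
`[∇ₓ(Π⁰(x,y)b)](Π⁰(x,y)b) = -(α+β)²/r³ • x̄`. -/
theorem jacobian_kelvin_radial_direction (α β : ℝ)
    (x y b : EuclideanSpace ℝ (Fin 3)) (hxy : x ≠ y)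
    (hb : b = ‖x - y‖⁻¹ • (x - y)) :
    fderiv ℝ (kelvinField α β y b) x (kelvinField α β y b x) =
      (-(α + β) ^ 2 / ‖x - y‖ ^ 3) • (‖x - y‖⁻¹ • (x - y)) := by
  have hr : ‖x - y‖ ≠ 0 := norm_ne_zero_iff.2 (sub_ne_zero.2 hxy)
  subst hb
  rw [kelvinField_unit α β hxy, map_smul, fderiv_kelvinField_unit α β hxy, smul_smul]
  congr 1
  field_simp
end
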